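/- Counterfactual fairness is logically independent of individual discrimination. Precisely: for every integer k ≥ 1 and every real τ with 0 ≤ τ < 1, (i) there exist a finite dataset D of tuples (x, a) ∈ ℝ × {0,1}, a classifier b : ℝ → {0,1}, a factual search center x_c ∈ ℝ with protected status a = 1, a counterfactual search center x_c^CF ∈ ℝ, and k-nearest-neighbor groups k-ctr of x_c in the control search space and k-tst of x_c^CF in the test search space, such that b(x_c) = b(x_c^CF) = 0 (counterfactual fairness holds) and yet p(k-ctr) − p(k-tst) > τ (individual discrimination holds); and (ii) there exist such data with b(x_c) ≠ b(x_c^CF) (counterfactual fairness fails) and yet p(k-ctr) − p(k-tst) ≤ τ (individual discrimination fails). -/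

import Mathlib

open Finset

/-- The control search space: tuples of the dataset with protected status `a = 1`. -/
def controlSpace (D : Finset (ℝ × Fin 2)) : Finset (ℝ × Fin 2) :=
  D.filter (fun t => t.2 = 1)

/-- The test search space: tuples of the dataset with protected status `a = 0`. -/
def testSpace (D : Finset (ℝ × Fin 2)) : Finset (ℝ × Fin 2) :=
  D.filter (fun t => t.2 = 0)

/-- `N` is a k-nearest-neighbor group of the center `z` within the search space `S`:
`N ⊆ S`, `|N| = k`, and every point of `N` is at least as close to `z` as every
point of `S \ N` (absolute-value distance on feature values). -/
def IsKNN (z : ℝ) (S N : Finset (ℝ × Fin 2)) (k : ℕ) : Prop :=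
  N ⊆ S ∧ N.card = k ∧ ∀ p ∈ N, ∀ q ∈ S \ N, |p.1 - z| ≤ |q.1 - z|

/-- Negative-decision proportion of a group of cardinality `k` under classifier `b`
(`b x = 0` is the negative outcome). -/
noncomputable def negProp (b : ℝ → Fin 2) (N : Finset (ℝ × Fin 2)) (k : ℕ) : ℝ :=
  ((N.filter (fun t => b t.1 = 0)).card : ℝ) / k

noncomputable def ctrlSet (k : ℕ) : Finset (ℝ × Fin 2) := (range k).image (fun i : ℕ => ((i:ℝ), (1:Fin 2)))
noncomputable def tstSet (k : ℕ) : Finset (ℝ × Fin 2) := (range k).image (fun i : ℕ => ((i:ℝ) + k, (0:Fin 2)))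
noncomputable def myD (k : ℕ) : Finset (ℝ × Fin 2) := ctrlSet k ∪ tstSet k

lemma controlSpace_eq (k : ℕ) :
    (myD k).filter (fun t => t.2 = 1) = ctrlSet k := by
  rw [myD, filter_union]
  have h1 : (ctrlSet k).filter (fun t => t.2 = 1) = ctrlSet k := by
    apply filter_true_of_mem
    intro t ht
    simp only [ctrlSet, mem_image, mem_range] at ht
    obtain ⟨i, _, rfl⟩ := ht
    rfl
  have h2 : (tstSet k).filter (fun t => t.2 = 1) = ∅ := by
    apply filter_false_of_mem
    intro t ht
    simp only [tstSet, mem_image, mem_range] at ht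
    obtain ⟨i, _, rfl⟩ := ht
    simp
  rw [h1, h2, union_empty]

lemma testSpace_eq (k : ℕ) :
    (myD k).filter (fun t => t.2 = 0) = tstSet k := by
  rw [myD, filter_union]
  have h1 : (ctrlSet k).filter (fun t => t.2 = 0) = ∅ := by
    apply filter_false_of_mem
    intro t ht
    simp only [ctrlSet, mem_image, mem_range] at ht
    obtain ⟨i, _, rfl⟩ := ht
    simp
  have h2 : (tstSet k).filter (fun t => t.2 = 0) = tstSet k := by
    apply filter_true_of_mem
    intro t ht
    simp only [tstSet, mem_image, mem_range] at ht
    obtain ⟨i, _, rfl⟩ := ht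
    rfl
  rw [h1, h2, empty_union]

lemma card_ctrlSet (k : ℕ) : (ctrlSet k).card = k := by
  rw [ctrlSet, card_image_of_injective, card_range]
  intro a b hab
  simpa using congrArg Prod.fst hab

lemma card_tstSet (k : ℕ) : (tstSet k).card = k := by
  rw [tstSet, card_image_of_injective, card_range]
  intro a b hab
  have := congrArg Prod.fst hab
  simp only [add_left_inj] at this
  exact_mod_cast this

lemma knn_self (z : ℝ) (S : Finset (ℝ × Fin 2)) (k : ℕ) (h : S.card = k) :
    IsKNN z S S k := by
  refine ⟨subset_rfl, h, ?_⟩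
  intro p hp q hq
  simp at hq


/-- Counterfactual fairness is logically independent of individual discrimination:
(i) there is a configuration where counterfactual fairness holds (`b x_c = b x_c^CF = 0`)
yet individual discrimination holds (`Δp > τ`); and (ii) there is a configuration where
counterfactual fairness fails (`b x_c ≠ b x_c^CF`) yet individual discrimination
fails (`Δp ≤ τ`). -/
theorem cf_independent_of_individual_discrimination
    (k : ℕ) (hk : 1 ≤ k) (τ : ℝ) (hτ0 : 0 ≤ τ) (hτ1 : τ < 1) :
    (∃ (D : Finset (ℝ × Fin 2)) (b : ℝ → Fin 2) (xc xcf : ℝ)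
        (ctr tst : Finset (ℝ × Fin 2)),
        (xc, 1) ∈ D ∧
        IsKNN xc (controlSpace D) ctr k ∧
        IsKNN xcf (testSpace D) tst k ∧
        b xc = 0 ∧ b xcf = 0 ∧
        negProp b ctr k - negProp b tst k > τ) ∧
    (∃ (D : Finset (ℝ × Fin 2)) (b : ℝ → Fin 2) (xc xcf : ℝ)
        (ctr tst : Finset (ℝ × Fin 2)),
        (xc, 1) ∈ D ∧
        IsKNN xc (controlSpace D) ctr k ∧
        IsKNN xcf (testSpace D) tst k ∧
        b xc ≠ b xcf ∧
        negProp b ctr k - negProp b tst k ≤ τ) := by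
  have hkpos : (0:ℝ) < k := by exact_mod_cast hk
  have hk0 : (k : ℝ) ≠ 0 := ne_of_gt hkpos
  have hxcD : ((0:ℝ), (1:Fin 2)) ∈ myD k := by
    rw [myD, mem_union]
    left
    rw [ctrlSet, mem_image]
    exact ⟨0, mem_range.mpr (Nat.one_le_iff_ne_zero.mp hk |> Nat.pos_of_ne_zero), by norm_num⟩
  have hctrl : controlSpace (myD k) = ctrlSet k := controlSpace_eq k
  have htst : testSpace (myD k) = tstSet k := testSpace_eq k
  have hKctr : ∀ z : ℝ, IsKNN z (controlSpace (myD k)) (ctrlSet k) k := by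
    intro z; rw [hctrl]; exact knn_self z _ k (card_ctrlSet k)
  have hKtst : ∀ z : ℝ, IsKNN z (testSpace (myD k)) (tstSet k) k := by
    intro z; rw [htst]; exact knn_self z _ k (card_tstSet k)
  constructor
  · -- part (i)
    set b1 : ℝ → Fin 2 := fun x => if x < (k:ℝ) then 0 else 1 with hb1
    refine ⟨myD k, b1, 0, 0, ctrlSet k, tstSet k, hxcD, hKctr 0, hKtst 0, ?_, ?_, ?_⟩
    · simp [hb1, hkpos]
    · simp [hb1, hkpos]
    · have h1 : negProp b1 (ctrlSet k) k = 1 := by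
        rw [negProp]
        have : (ctrlSet k).filter (fun t => b1 t.1 = 0) = ctrlSet k := by
          apply filter_true_of_mem
          intro t ht
          simp only [ctrlSet, mem_image, mem_range] at ht
          obtain ⟨i, hi, rfl⟩ := ht
          have : (i:ℝ) < k := by exact_mod_cast hi
          simp [hb1, this]
        rw [this, card_ctrlSet, div_self hk0]
      have h2 : negProp b1 (tstSet k) k = 0 := by
        rw [negProp]
        have : (tstSet k).filter (fun t => b1 t.1 = 0) = ∅ := by
          apply filter_false_of_mem
          intro t ht
          simp only [tstSet, mem_image, mem_range] at ht
          obtain ⟨i, hi, rfl⟩ := ht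
          have h : ¬ ((i:ℝ) + k < k) := by
            push_neg
            have : (0:ℝ) ≤ (i:ℝ) := Nat.cast_nonneg i
            linarith
          simp [hb1, h]
        rw [this]
        simp
      rw [h1, h2]
      linarith
  · -- part (ii)
    set b2 : ℝ → Fin 2 := fun x => if x < 0 then 1 else 0 with hb2
    refine ⟨myD k, b2, 0, -1, ctrlSet k, tstSet k, hxcD, hKctr 0, hKtst (-1), ?_, ?_⟩
    · simp [hb2]
    · have hfull : ∀ S : Finset (ℝ × Fin 2), (∀ t ∈ S, (0:ℝ) ≤ t.1) →
          S.filter (fun t => b2 t.1 = 0) = S := by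
        intro S hS
        apply filter_true_of_mem
        intro t ht
        have := hS t ht
        simp [hb2, not_lt.mpr this]
      have h1 : negProp b2 (ctrlSet k) k = 1 := by
        rw [negProp, hfull _ ?_, card_ctrlSet, div_self hk0]
        intro t ht
        simp only [ctrlSet, mem_image, mem_range] at ht
        obtain ⟨i, hi, rfl⟩ := ht
        exact Nat.cast_nonneg i
      have h2 : negProp b2 (tstSet k) k = 1 := by
        rw [negProp, hfull _ ?_, card_tstSet, div_self hk0]
        intro t ht
        simp only [tstSet, mem_image, mem_range] at ht
        obtain ⟨i, hi, rfl⟩ := ht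
        exact add_nonneg (Nat.cast_nonneg i) (Nat.cast_nonneg k)
      rw [h1, h2]
      linarith
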